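/- arXiv:2511.03804 — 2 statements merged into one kernel-verified Lean document; each statement's English description precedes it below -/
import Mathlib

section
/- Let R be a commutative ring, let m be a natural number, let d : Fin m → R, and let N be an m×m matrix over R. Let D = diagonal(d) be the diagonal matrix with entries d. Then det(D + N) = Σ over all subsets S of Fin m of (Π_{i ∈ S} d i) · det(N_{Sᶜ}), where N_{Sᶜ} denotes the principal submatrix of N obtained by deleting the rows and columns with indices in S (and the determinant of the empty matrix is 1). -/
/-!
The determinant is multilinear in the rows, so splitting every row of `diagonal d + N` expands
the determinant into a sum, over the set `S` of rows taken from `diagonal d`, of determinants of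
mixed matrices. Such a matrix is block lower triangular for the decomposition `S ⊔ Sᶜ`, with
diagonal blocks `diagonal (d ∘ (↑) : S → R)` and `N_{Sᶜ}`.
-/

open Matrix Finset

namespace Matrix

variable {n R : Type*} [Fintype n] [DecidableEq n] [CommRing R]

theorem det_of_piecewise_diagonal (d : n → R) (N : Matrix n n R) (S : Finset n) :
    (of (S.piecewise (diagonal d) N)).det =
      (∏ i ∈ S, d i) * (N.submatrix ((↑) : (Sᶜ : Finset n) → n) (↑)).det := by
  set M := of (S.piecewise (diagonal d) N)
  have hzero : ∀ i, i ∉ Sᶜ → ∀ j, j ∈ Sᶜ → M i j = 0 := by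
    intro i hi j hj
    have hij : i ≠ j := by rintro rfl; exact hi hj
    simp_all [M, Finset.piecewise]
  have hcompl : M.toSquareBlockProp (· ∈ Sᶜ) = N.submatrix (↑) (↑) := by
    ext i j
    simp [M, toSquareBlockProp_def, Finset.piecewise, mem_compl.mp i.2]
  have hS : M.toSquareBlockProp (· ∉ Sᶜ) = diagonal fun i : {i // i ∉ Sᶜ} => d i := by
    ext i j
    simp [M, toSquareBlockProp_def, Finset.piecewise, not_not.mp (mem_compl.not.mp i.2),
      diagonal_apply, Subtype.ext_iff]
  rw [twoBlockTriangular_det M _ hzero, hcompl, hS, det_diagonal, mul_comm]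
  congr 1
  · exact (prod_subtype (p := (· ∉ Sᶜ)) S (by simp) d).symm
  · congr! -- the two sides carry different `Fintype` instances on `Sᶜ`

end Matrix

/-- Multilinear expansion of the determinant of `diagonal d + N` in its diagonal
part: a sum over subsets `S` of products of diagonal entries times the principal
minor of `N` on the complement of `S`. -/
theorem det_diagonal_add_eq_sum_prod_mul_det {R : Type*} [CommRing R] (m : ℕ)
    (d : Fin m → R) (N : Matrix (Fin m) (Fin m) R) :
    (Matrix.diagonal d + N).det =
      ∑ S : Finset (Fin m), (∏ i ∈ S, d i) *
        (N.submatrix (fun i : (Sᶜ : Finset (Fin m)) => (i : Fin m))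
          (fun j : (Sᶜ : Finset (Fin m)) => (j : Fin m))).det := by
  calc (diagonal d + N).det = ∑ S : Finset (Fin m), (of (S.piecewise (diagonal d) N)).det :=
        detRowAlternating.map_add_univ (diagonal d) N
    _ = _ := sum_congr rfl fun S _ => det_of_piecewise_diagonal d N S
end

section
/- Let m ≥ 1. Let F : (Fin m → ℝ) → ℂ, r : Fin m → ((Fin m → ℝ) → ℂ), and K : Fin m → Fin m → ((Fin m → ℝ) → ℂ) be functions, each differentiable (in the real sense) everywhere on Fin m → ℝ. For a function G : (Fin m → ℝ) → ℂ and k ∈ Fin m write D_k G for the function t ↦ fderiv ℝ G t (Pi.single k 1) (the partial derivative in the k-th coordinate). Assume that for every t: (i) D_k F t = r k t · F t for every k; (ii) D_k (r j) t = −(K j k t) · (K k j t) for all j ≠ k; (iii) D_k (K i j) t = −(K i k t) · (K k j t) for all pairwise distinct i, j, k. Then for every t, the iterated partial derivative D_0 (D_1 (⋯ (D_{m−1} F) ⋯)) t equals det(M t) · F t, where M t is the m×m complex matrix with entries (M t) j k = r j t if j = k and (M t) j k = K j k t if j ≠ k. -/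
/-!
Write `M_α` for the principal submatrix of `M = [1_{j=k} r j + 1_{j≠k} K j k]` on a word `α` of
distinct indices. For `l ∉ α`, hypotheses (ii)–(iii) say that `∂_l M_α = -u vᵀ` with
`u = M(α·, l)` and `v = M(l, α·)`, so by Jacobi's formula `∂_l det M_α` is
`-∑_s u_s det(M_α with row s replaced by v)`. Together with `∂_l F = r_l F` this is exactly the
first-column expansion of the bordered determinant `det M_{l::α}`, i.e.
`∂_l (det M_α · F) = det M_{l::α} · F`, and induction along the word `0, 1, …, m-1` gives the
theorem.
-/

/-- The partial derivative in the `k`-th coordinate direction of a function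
on `Fin m → ℝ`. -/
noncomputable def partialD (m : ℕ) (k : Fin m) (G : (Fin m → ℝ) → ℂ) :
    (Fin m → ℝ) → ℂ :=
  fun t => fderiv ℝ G t (Pi.single k 1)

namespace Matrix

theorem updateRow_submatrix_eq_submatrix_update {ι R : Type*} {p : ℕ} (M : Matrix ι ι R)
    (α β : Fin p → ι) (s : Fin p) (l : ι) :
    (M.submatrix α β).updateRow s (fun q => M l (β q)) = M.submatrix (Function.update α s l) β := by
  ext i j
  by_cases h : i = s
  · subst h; simp
  · simp [updateRow_apply, h]

variable {ι R : Type*} [CommRing R]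

theorem det_submatrix_cons_removeNth {p : ℕ} (M : Matrix ι ι R) (α : Fin (p + 1) → ι)
    (s : Fin (p + 1)) (l : ι) :
    (M.submatrix (Fin.cons l (s.removeNth α)) α).det =
      (-1) ^ (s : ℕ) * (M.submatrix (Function.update α s l) α).det := by
  have hrow : (Fin.cons l (s.removeNth α) : Fin (p + 1) → ι)
      = Function.update α s l ∘ s.cycleRange.symm := by
    rw [← Fin.cons_removeNth_eq_comp_cycleRange_symm, Fin.removeNth_update, Function.update_self]
  have hperm : M.submatrix (Function.update α s l ∘ s.cycleRange.symm) α
      = (M.submatrix (Function.update α s l) α).submatrix s.cycleRange.symm id := rfl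
  rw [hrow, hperm, det_permute]
  simp

theorem det_submatrix_cons_cons {p : ℕ} (M : Matrix ι ι R) (α : Fin p → ι) (l : ι) :
    (M.submatrix (Fin.cons l α) (Fin.cons l α)).det =
      M l l * (M.submatrix α α).det -
        ∑ s, M (α s) l * (M.submatrix (Function.update α s l) α).det := by
  cases p with
  | zero => simp [det_unique]
  | succ p =>
    rw [det_succ_column_zero, Fin.sum_univ_succ, sub_eq_add_neg, ← Finset.sum_neg_distrib]
    congr 1
    · simp
    refine Finset.sum_congr rfl fun s _ => ?_
    have hrows :
        (Fin.cons l α : Fin (p + 2) → ι) ∘ s.succ.succAbove = Fin.cons l (s.removeNth α) := by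
      ext k; cases k using Fin.cases <;> simp [Fin.removeNth]
    have hsign : ((-1 : R) ^ (s : ℕ)) * (-1) ^ (s : ℕ) = 1 := by rw [← mul_pow]; simp
    simp only [submatrix_submatrix, hrows, Fin.cons_comp_succ, det_submatrix_cons_removeNth,
      submatrix_apply, Fin.cons_succ, Fin.cons_zero, Fin.val_succ, pow_succ]
    linear_combination (-(M (α s) l * (M.submatrix (Function.update α s l) α).det)) * hsign

end Matrix

section DetDeriv

open Matrix

variable {𝕜 E ι R : Type*} [NontriviallyNormedField 𝕜] [NormedAddCommGroup E] [NormedSpace 𝕜 E]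
  [NormedCommRing R] [NormedAlgebra 𝕜 R] [Fintype ι] [DecidableEq ι]

variable (𝕜 ι R) in
noncomputable def Matrix.detRowContinuousMultilinear :
    ContinuousMultilinearMap 𝕜 (fun _ : ι => ι → R) R where
  toMultilinearMap :=
    (detRowAlternating : (ι → R) [⋀^ι]→ₗ[R] R).toMultilinearMap.restrictScalars 𝕜
  cont := continuous_id.matrix_det

theorem hasFDerivAt_det {A : E → Matrix ι ι R} {A' : ι → E →L[𝕜] (ι → R)} {x : E}
    (hA : ∀ i, HasFDerivAt (fun y => A y i) (A' i) x) :
    HasFDerivAt (fun y => (A y).det)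
      (∑ i, ((detRowContinuousMultilinear 𝕜 ι R).toContinuousLinearMap (A x) i).comp (A' i)) x :=
  HasFDerivAt.multilinear_comp (detRowContinuousMultilinear 𝕜 ι R) hA

theorem differentiableAt_det {A : E → Matrix ι ι R} {x : E}
    (hA : ∀ i j, DifferentiableAt 𝕜 (fun y => A y i j) x) :
    DifferentiableAt 𝕜 (fun y => (A y).det) x :=
  (hasFDerivAt_det fun i => (differentiableAt_pi.2 (hA i)).hasFDerivAt).differentiableAt

theorem fderiv_det_apply {A : E → Matrix ι ι R} {x : E}
    (hA : ∀ i j, DifferentiableAt 𝕜 (fun y => A y i j) x) (v : E) :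
    fderiv 𝕜 (fun y => (A y).det) x v =
      ∑ i, ((A x).updateRow i fun j => fderiv 𝕜 (fun y => A y i j) x v).det := by
  rw [(hasFDerivAt_det fun i => (differentiableAt_pi.2 (hA i)).hasFDerivAt).fderiv]
  simp only [FunLike.coe_sum, Finset.sum_apply, ContinuousLinearMap.coe_comp,
    Function.comp_apply, fderiv_pi (hA _)]
  rfl

end DetDeriv

section Step

variable {𝕜 E ι R : Type*} [NontriviallyNormedField 𝕜] [NormedAddCommGroup E] [NormedSpace 𝕜 E]
  [NormedCommRing R] [NormedAlgebra 𝕜 R]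

theorem fderiv_det_submatrix_mul_apply {M : E → Matrix ι ι R} {F : E → R} {x w : E} {l : ι}
    {p : ℕ} {α : Fin p → ι} (hl : l ∉ Set.range α)
    (hM : ∀ i j, DifferentiableAt 𝕜 (fun y => M y i j) x) (hF : DifferentiableAt 𝕜 F x)
    (hFw : fderiv 𝕜 F x w = M x l l * F x)
    (hMw : ∀ i j, i ≠ l → j ≠ l → fderiv 𝕜 (fun y => M y i j) x w = -(M x i l * M x l j)) :
    fderiv 𝕜 (fun y => ((M y).submatrix α α).det * F y) x w =
      ((M x).submatrix (Fin.cons l α) (Fin.cons l α)).det * F x := by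
  have hα : ∀ s, α s ≠ l := fun s h => hl ⟨s, h⟩
  have hsub : ∀ s q, DifferentiableAt 𝕜 (fun y => (M y).submatrix α α s q) x :=
    fun s q => hM (α s) (α q)
  have hrow : ∀ s, (fun q => fderiv 𝕜 (fun y => (M y).submatrix α α s q) x w)
      = -M x (α s) l • fun q => M x l (α q) := by
    intro s; funext q
    simp [Matrix.submatrix_apply, hMw _ _ (hα s) (hα q)]
  rw [fderiv_fun_mul (differentiableAt_det hsub) hF]
  simp only [add_apply, smul_apply, smul_eq_mul, hFw, fderiv_det_apply hsub, hrow,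
    Matrix.det_updateRow_smul, Matrix.updateRow_submatrix_eq_submatrix_update,
    Matrix.det_submatrix_cons_cons, neg_mul, Finset.sum_neg_distrib]
  ring

end Step

theorem foldr_partialD_ofFn_eq_det_submatrix_mul {m : ℕ}
    {M : (Fin m → ℝ) → Matrix (Fin m) (Fin m) ℂ} {F : (Fin m → ℝ) → ℂ}
    (hM : ∀ i j, Differentiable ℝ fun t => M t i j) (hF : Differentiable ℝ F)
    (hFk : ∀ t k, partialD m k F t = M t k k * F t)
    (hMk : ∀ t i j k, i ≠ k → j ≠ k → partialD m k (fun u => M u i j) t = -(M t i k * M t k j))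
    {p : ℕ} {α : Fin p → Fin m} (hα : Function.Injective α) :
    (List.ofFn α).foldr (partialD m) F = fun t => ((M t).submatrix α α).det * F t := by
  induction p with
  | zero => funext t; simp
  | succ p ih =>
    obtain ⟨l, β, rfl⟩ : ∃ l β, α = Fin.cons l β := ⟨α 0, Fin.tail α, (Fin.cons_self_tail α).symm⟩
    rw [Fin.cons_injective_iff] at hα
    simp only [List.ofFn_succ, Fin.cons_zero, Fin.cons_succ, List.foldr_cons, ih hα.2]
    funext t
    exact fderiv_det_submatrix_mul_apply hα.1 (fun i j => hM i j t) (hF t) (hFk t _)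
      (fun i j hi hj => hMk t i j _ hi hj)

theorem iterated_partial_eq_det_mul_general
    (m : ℕ)
    (F : (Fin m → ℝ) → ℂ)
    (r : Fin m → (Fin m → ℝ) → ℂ)
    (K : Fin m → Fin m → (Fin m → ℝ) → ℂ)
    (hF : Differentiable ℝ F)
    (hr : ∀ k, Differentiable ℝ (r k))
    (hK : ∀ i j, Differentiable ℝ (K i j))
    (h1 : ∀ t (k : Fin m), partialD m k F t = r k t * F t)
    (h2 : ∀ t (j k : Fin m), j ≠ k →
      partialD m k (r j) t = -(K j k t * K k j t))
    (h3 : ∀ t (i j k : Fin m), i ≠ j → j ≠ k → i ≠ k →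
      partialD m k (K i j) t = -(K i k t * K k j t)) :
    ∀ t, (List.finRange m).foldr (partialD m) F t =
      (Matrix.of fun j k : Fin m => if j = k then r j t else K j k t).det * F t := by
  set M : (Fin m → ℝ) → Matrix (Fin m) (Fin m) ℂ :=
    fun t => Matrix.of fun j k => if j = k then r j t else K j k t
  have hM : ∀ i j, Differentiable ℝ fun t => M t i j := by
    intro i j
    by_cases h : i = j <;> simp [M, h, hr, hK]
  have hMk : ∀ t i j k, i ≠ k → j ≠ k →
      partialD m k (fun u => M u i j) t = -(M t i k * M t k j) := by
    intro t i j k hik hjk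
    by_cases hij : i = j
    · subst hij; simp [M, hik, hik.symm, h2 t i k hik]
    · simp [M, hij, hik, hjk.symm, h3 t i j k hij hjk hik]
  intro t
  rw [← List.ofFn_id, foldr_partialD_ofFn_eq_det_submatrix_mul hM hF (by simpa [M] using h1) hMk
    Function.injective_id]
  rfl

/-- Abstract fermionization identity: if `F`, `r j`, `K i j` are differentiable,
`∂_k F = r k · F`, `∂_k r j = −K j k · K k j` for `j ≠ k` and
`∂_k K i j = −K i k · K k j` for pairwise distinct `i, j, k`, then the iterated
partial derivative `∂_0 ∂_1 ⋯ ∂_{m−1} F` equals `det M · F`, where `M` has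
diagonal entries `r j` and off-diagonal entries `K j k`. -/
theorem iterated_partial_eq_det_mul
    (m : ℕ) (hm : 1 ≤ m)
    (F : (Fin m → ℝ) → ℂ)
    (r : Fin m → (Fin m → ℝ) → ℂ)
    (K : Fin m → Fin m → (Fin m → ℝ) → ℂ)
    (hF : Differentiable ℝ F)
    (hr : ∀ k, Differentiable ℝ (r k))
    (hK : ∀ i j, Differentiable ℝ (K i j))
    (h1 : ∀ t (k : Fin m), partialD m k F t = r k t * F t)
    (h2 : ∀ t (j k : Fin m), j ≠ k →
      partialD m k (r j) t = -(K j k t * K k j t))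
    (h3 : ∀ t (i j k : Fin m), i ≠ j → j ≠ k → i ≠ k →
      partialD m k (K i j) t = -(K i k t * K k j t)) :
    ∀ t, (List.finRange m).foldr (partialD m) F t =
      (Matrix.of fun j k : Fin m => if j = k then r j t else K j k t).det * F t :=
  iterated_partial_eq_det_mul_general m F r K hF hr hK h1 h2 h3
end
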